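/- arXiv:2604.25854 — 2 statements merged into one kernel-verified Lean document; each statement's English description precedes it below -/
import Mathlib

section
/- Let G be an additive group and U an ultrafilter on G closed under countable intersections. Let μ : Set G → ℝ be a finitely additive set function with 0 ≤ μ(A) ≤ 1 for all A, μ(G) = 1, which is σ-additive (for every pairwise disjoint sequence (A_n), μ(⋃_n A_n) = ∑'_n μ(A_n)). Suppose ν : Set G → ℝ satisfies: for every I ⊆ G, the function j ↦ μ(I - j) tends to ν(I) along U, where I - j := {i : i + j ∈ I}. Then ν is σ-additive: for every pairwise disjoint sequence (A_n) of subsets of G, ν(⋃_n A_n) = ∑'_n ν(A_n). -/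
/-!
Write `μⱼ I := μ (I - j)`. Each `μⱼ` is nonnegative, additive and σ-additive, and `ν` is their
pointwise limit along `U`, so `ν` is nonnegative and additive. For such a set function,
σ-additivity on a disjoint sequence `A` amounts to the tails `⋃ n, A (n + N)` having measure
tending to `0`. If the `ν`-measures of the tails stayed above `ε`, then for each `N` the set of `j`
with `μⱼ (⋃ n, A (n + N)) > ε / 2` would lie in `U`; by σ-completeness some `j` lies in all of
them, contradicting the σ-additivity of `μⱼ`.
-/

open Filter Set Function Topology

lemma countableInterFilter_of_iInter_nat_mem {α : Type*} {l : Filter α}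
    (h : ∀ s : ℕ → Set α, (∀ n, s n ∈ l) → ⋂ n, s n ∈ l) : CountableInterFilter l where
  countable_sInter_mem S hS hSl := by
    rcases S.eq_empty_or_nonempty with rfl | hne
    · simp
    obtain ⟨s, rfl⟩ := hS.exists_eq_range hne
    rw [sInter_range]
    exact h s fun n => hSl _ (mem_range_self n)

section SetFunction

variable {α β ι : Type*}

def IsAdditive (m : Set α → ℝ) : Prop :=
  ∀ s t, Disjoint s t → m (s ∪ t) = m s + m t

def IsSigmaAdditive (m : Set α → ℝ) : Prop :=
  ∀ A : ℕ → Set α, Pairwise (Disjoint on A) → m (⋃ n, A n) = ∑' n, m (A n)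

lemma IsAdditive.comp_preimage {m : Set α → ℝ} (hm : IsAdditive m) (f : α → β) :
    IsAdditive fun s => m (f ⁻¹' s) :=
  fun s t hst => by simpa only [preimage_union] using hm _ _ (Disjoint.preimage f hst)

lemma IsSigmaAdditive.comp_preimage {m : Set α → ℝ} (hm : IsSigmaAdditive m) (f : α → β) :
    IsSigmaAdditive fun s => m (f ⁻¹' s) :=
  fun A hA => by
    simpa only [preimage_iUnion] using hm _ fun i j hij => Disjoint.preimage f (hA hij)

lemma IsAdditive.monotone {m : Set α → ℝ} (hm : IsAdditive m) (h0 : ∀ s, 0 ≤ m s) :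
    Monotone m := fun s t hst => by
  have := hm s (t \ s) disjoint_sdiff_right
  rw [union_sdiff_cancel hst] at this
  linarith [h0 (t \ s)]

lemma IsAdditive.of_tendsto {F : Filter ι} [F.NeBot] {m : ι → Set α → ℝ} {ν : Set α → ℝ}
    (hm : ∀ i, IsAdditive (m i)) (hν : ∀ s, Tendsto (fun i => m i s) F (𝓝 (ν s))) :
    IsAdditive ν := fun s t hst =>
  tendsto_nhds_unique (hν (s ∪ t)) <|
    ((hν s).add (hν t)).congr fun i => (hm i s t hst).symm

lemma IsAdditive.map_iUnion_eq_sum_add_map_iUnion_add_nat {m : Set α → ℝ} (hm : IsAdditive m)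
    {A : ℕ → Set α} (hA : Pairwise (Disjoint on A)) (N : ℕ) :
    m (⋃ n, A n) = ∑ n ∈ Finset.range N, m (A n) + m (⋃ n, A (n + N)) := by
  induction N with
  | zero => simp
  | succ N ih =>
    have hsplit : ⋃ n, A (n + N) = A N ∪ ⋃ n, A (n + (N + 1)) := by
      rw [← union_iUnion_nat_succ]
      simp only [zero_add, Nat.add_right_comm _ 1 N, Nat.add_assoc]
    have hdisj : Disjoint (A N) (⋃ n, A (n + (N + 1))) :=
      disjoint_iUnion_right.2 fun n => hA (by omega)
    rw [ih, hsplit, hm _ _ hdisj, Finset.sum_range_succ, add_assoc]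

lemma IsAdditive.hasSum_iff_tendsto_map_iUnion_add_nat {m : Set α → ℝ} (hm : IsAdditive m)
    (h0 : ∀ s, 0 ≤ m s) {A : ℕ → Set α} (hA : Pairwise (Disjoint on A)) :
    HasSum (fun n => m (A n)) (m (⋃ n, A n)) ↔
      Tendsto (fun N => m (⋃ n, A (n + N))) atTop (𝓝 0) := by
  have hsum : ∀ N, ∑ n ∈ Finset.range N, m (A n) = m (⋃ n, A n) - m (⋃ n, A (n + N)) :=
    fun N => by rw [hm.map_iUnion_eq_sum_add_map_iUnion_add_nat hA N]; ring
  rw [hasSum_iff_tendsto_nat_of_nonneg (fun n => h0 _), funext hsum]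
  simpa using tendsto_const_sub_iff (m (⋃ n, A n)) (c := 0) (l := atTop)

lemma IsSigmaAdditive.tendsto_map_iUnion_add_nat {m : Set α → ℝ} (hσ : IsSigmaAdditive m)
    (hm : IsAdditive m) (h0 : ∀ s, 0 ≤ m s) {A : ℕ → Set α} (hA : Pairwise (Disjoint on A)) :
    Tendsto (fun N => m (⋃ n, A (n + N))) atTop (𝓝 0) := by
  have hsummable : Summable fun n => m (A n) :=
    summable_of_sum_range_le (fun n => h0 _) fun N => by
      linarith [hm.map_iUnion_eq_sum_add_map_iUnion_add_nat hA N, h0 (⋃ n, A (n + N))]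
  refine (hm.hasSum_iff_tendsto_map_iUnion_add_nat h0 hA).1 ?_
  exact hσ A hA ▸ hsummable.hasSum

variable {F : Filter ι} {m : ι → Set α → ℝ} {ν : Set α → ℝ}

lemma tendsto_map_iUnion_add_nat_of_tendsto [F.NeBot] [CountableInterFilter F]
    (hm : ∀ i, IsAdditive (m i)) (hσ : ∀ i, IsSigmaAdditive (m i)) (h0 : ∀ i s, 0 ≤ m i s)
    (hν : ∀ s, Tendsto (fun i => m i s) F (𝓝 (ν s)))
    {A : ℕ → Set α} (hA : Pairwise (Disjoint on A)) :
    Tendsto (fun N => ν (⋃ n, A (n + N))) atTop (𝓝 0) := by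
  have hν0 : ∀ s, 0 ≤ ν s := fun s => ge_of_tendsto' (hν s) fun i => h0 i s
  have hanti : Antitone fun N => ν (⋃ n, A (n + N)) := fun M N hMN =>
    (IsAdditive.of_tendsto hm hν).monotone hν0 <| iUnion_subset fun n =>
      subset_iUnion_of_subset (n + N - M) (by rw [Nat.sub_add_cancel (by omega)])
  refine tendsto_order.2 ⟨fun a ha => Eventually.of_forall fun N => ha.trans_le (hν0 _),
    fun ε hε => ?_⟩
  suffices ∃ N, ν (⋃ n, A (n + N)) < ε from
    let ⟨N, hN⟩ := this
    eventually_atTop.2 ⟨N, fun M hM => (hanti hM).trans_lt hN⟩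
  by_contra! hlarge
  have hev : ∀ᶠ i in F, ∀ N, ε / 2 < m i (⋃ n, A (n + N)) :=
    eventually_countable_forall.2 fun N =>
      (hν _).eventually (lt_mem_nhds (by linarith [hlarge N]))
  obtain ⟨i, hi⟩ := hev.exists
  obtain ⟨N, hN⟩ := ((hσ i).tendsto_map_iUnion_add_nat (hm i) (h0 i) hA).eventually
    (gt_mem_nhds (half_pos hε)) |>.exists
  exact (hi N).not_gt hN

lemma IsSigmaAdditive.of_tendsto [F.NeBot] [CountableInterFilter F]
    (hm : ∀ i, IsAdditive (m i)) (hσ : ∀ i, IsSigmaAdditive (m i)) (h0 : ∀ i s, 0 ≤ m i s)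
    (hν : ∀ s, Tendsto (fun i => m i s) F (𝓝 (ν s))) : IsSigmaAdditive ν := by
  intro A hA
  have hν0 : ∀ s, 0 ≤ ν s := fun s => ge_of_tendsto' (hν s) fun i => h0 i s
  have htail := tendsto_map_iUnion_add_nat_of_tendsto hm hσ h0 hν hA
  exact ((IsAdditive.of_tendsto hm hν).hasSum_iff_tendsto_map_iUnion_add_nat hν0 hA).2
    htail |>.tsum_eq.symm

end SetFunction

theorem stmt_3_general {G : Type*} [AddGroup G] (U : Ultrafilter G)
    (hsigma : ∀ A : ℕ → Set G, (∀ n, A n ∈ U) → (⋂ n, A n) ∈ U)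
    (μ : Set G → ℝ)
    (hadd : ∀ A B : Set G, Disjoint A B → μ (A ∪ B) = μ A + μ B)
    (hbdd : ∀ A : Set G, 0 ≤ μ A ∧ μ A ≤ 1)
    (hμσ : ∀ A : ℕ → Set G, Pairwise (Function.onFun Disjoint A) →
      μ (⋃ n, A n) = ∑' n, μ (A n))
    (ν : Set G → ℝ)
    (hν : ∀ I : Set G, Tendsto (fun j => μ {i | i + j ∈ I}) ↑U (nhds (ν I))) :
    ∀ A : ℕ → Set G, Pairwise (Function.onFun Disjoint A) →
      ν (⋃ n, A n) = ∑' n, ν (A n) := by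
  have : CountableInterFilter (U : Filter G) := countableInterFilter_of_iInter_nat_mem hsigma
  exact IsSigmaAdditive.of_tendsto (m := fun j s => μ ((· + j) ⁻¹' s))
    (fun _ => IsAdditive.comp_preimage hadd _) (fun _ => IsSigmaAdditive.comp_preimage hμσ _)
    (fun _ _ => (hbdd _).1) hν

theorem stmt_3 {G : Type*} [AddGroup G] (U : Ultrafilter G)
    (hsigma : ∀ A : ℕ → Set G, (∀ n, A n ∈ U) → (⋂ n, A n) ∈ U)
    (μ : Set G → ℝ)
    (hadd : ∀ A B : Set G, Disjoint A B → μ (A ∪ B) = μ A + μ B)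
    (hempty : μ ∅ = 0)
    (hbdd : ∀ A : Set G, 0 ≤ μ A ∧ μ A ≤ 1)
    (huniv : μ Set.univ = 1)
    (hμσ : ∀ A : ℕ → Set G, Pairwise (Function.onFun Disjoint A) →
      μ (⋃ n, A n) = ∑' n, μ (A n))
    (ν : Set G → ℝ)
    (hν : ∀ I : Set G, Tendsto (fun j => μ {i | i + j ∈ I}) ↑U (nhds (ν I))) :
    ∀ A : ℕ → Set G, Pairwise (Function.onFun Disjoint A) →
      ν (⋃ n, A n) = ∑' n, ν (A n) :=
  stmt_3_general U hsigma μ hadd hbdd hμσ ν hν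
end

section
/- Let φ be a state on ℓ∞(κ) such that the supremum, over all finite subsets I ⊆ κ, of the real part of ν_φ(I) equals 1. Then for every subset I ⊆ κ, ν_φ(I) = ∑'_{i ∈ I} ν_φ({i}). -/
open scoped ENNReal
open Filter

/-- The indicator function of `I` as an element of `ℓ∞(κ)`. -/
noncomputable def chi {κ : Type*} (I : Set κ) : lp (fun _ : κ => ℂ) ∞ :=
  ⟨I.indicator (fun _ => (1 : ℂ)), memℓp_infty ⟨1, by
    rintro x ⟨i, rfl⟩
    by_cases h : i ∈ I <;> simp [Set.indicator, h]⟩⟩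

/-- A state on `ℓ∞(κ)`: a continuous linear functional with `φ 1 = 1` that takes
nonnegative real values on functions with nonnegative real values. -/
structure IsState {κ : Type*} (φ : lp (fun _ : κ => ℂ) ∞ →L[ℂ] ℂ) : Prop where
  map_one : φ 1 = 1
  nonneg : ∀ f : lp (fun _ : κ => ℂ) ∞,
    (∀ i, ∃ r : ℝ, 0 ≤ r ∧ f i = r) → ∃ r : ℝ, 0 ≤ r ∧ φ f = r

lemma chi_apply {κ : Type*} (I : Set κ) (i : κ) :
    chi I i = I.indicator (fun _ => (1 : ℂ)) i := rfl

lemma chi_union {κ : Type*} {I J : Set κ} (h : Disjoint I J) :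
    chi (I ∪ J) = chi I + chi J := by
  apply lp.ext
  rw [lp.coeFn_add]
  funext i
  simp only [Pi.add_apply, chi_apply, Set.indicator_union_of_disjoint h]

lemma chi_univ {κ : Type*} : chi (Set.univ : Set κ) = 1 := by
  apply lp.ext
  rw [lp.infty_coeFn_one]
  funext i
  simp [chi_apply]

theorem stmt_5 {κ : Type*} [Infinite κ] (φ : lp (fun _ : κ => ℂ) ∞ →L[ℂ] ℂ)
    (hφ : IsState φ)
    (hsup : (⨆ I : {I : Set κ // I.Finite}, (φ (chi I.1)).re) = 1) :
    ∀ I : Set κ, φ (chi I) = ∑' i : I, φ (chi {(i : κ)}) := by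
  classical
  set ν : Set κ → ℝ := fun I => (φ (chi I)).re with hν
  have hkey : ∀ I : Set κ, 0 ≤ ν I ∧ φ (chi I) = (ν I : ℂ) := by
    intro I
    obtain ⟨r, hr, h⟩ := hφ.nonneg (chi I) (by
      intro i
      by_cases hi : i ∈ I
      · exact ⟨1, by norm_num, by simp [chi_apply, Set.indicator, hi]⟩
      · exact ⟨0, le_refl _, by simp [chi_apply, Set.indicator, hi]⟩)
    have : ν I = r := by simp [hν, h]
    exact ⟨this ▸ hr, by rw [h, this]⟩
  have hnn : ∀ I : Set κ, 0 ≤ ν I := fun I => (hkey I).1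
  have hreal : ∀ I : Set κ, φ (chi I) = (ν I : ℂ) := fun I => (hkey I).2
  have hadd : ∀ I J : Set κ, Disjoint I J → ν (I ∪ J) = ν I + ν J := by
    intro I J h
    simp [hν, chi_union h, map_add, Complex.add_re]
  have hmono : ∀ I J : Set κ, I ⊆ J → ν I ≤ ν J := by
    intro I J h
    have : ν J = ν I + ν (J \ I) := by
      rw [← hadd I (J \ I) Set.disjoint_sdiff_right, Set.union_diff_cancel h]
    linarith [hnn (J \ I)]
  have hsum : ∀ s : Finset κ, ν ↑s = ∑ i ∈ s, ν {i} := by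
    intro s
    induction s using Finset.induction_on with
    | empty =>
      have h0 : chi (∅ : Set κ) = 0 := lp.ext (by
        rw [lp.coeFn_zero]; funext i; simp [chi_apply])
      simp [hν, h0]
    | @insert a s hx ih =>
      have : (↑(insert a s) : Set κ) = {a} ∪ ↑s := by
        rw [Finset.coe_insert, Set.insert_eq]
      rw [this, hadd {a} ↑s (by simpa using hx), Finset.sum_insert hx, ih]
  -- tsum facts for an arbitrary set J
  have hfam : ∀ J : Set κ, Summable (fun i : J => ν {(i : κ)}) ∧
      (∑' i : J, ν {(i : κ)}) ≤ ν J ∧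
      ∀ t : Finset κ, ↑t ⊆ J → ν ↑t ≤ ∑' i : J, ν {(i : κ)} := by
    intro J
    have hbdd : ∀ u : Finset J, ∑ i ∈ u, ν {(i : κ)} ≤ ν J := by
      intro u
      have h1 : ∑ i ∈ u, ν {(i : κ)} = ∑ i ∈ u.image Subtype.val, ν {i} := by
        rw [Finset.sum_image (fun a _ b _ h => Subtype.ext h)]
      rw [h1, ← hsum]
      apply hmono
      intro x hx
      simp only [Finset.coe_image, Set.mem_image, Finset.mem_coe] at hx
      obtain ⟨⟨y, hy⟩, _, rfl⟩ := hx
      exact hy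
    have hsummable : Summable (fun i : J => ν {(i : κ)}) :=
      summable_of_sum_le (fun i => hnn _) hbdd
    refine ⟨hsummable, Summable.tsum_le_of_sum_le hsummable hbdd, ?_⟩
    intro t ht
    have h2 : ν ↑t = ∑ i ∈ t.preimage ((↑) : J → κ) Subtype.val_injective.injOn,
        ν {(i : κ)} := by
      rw [Finset.sum_preimage ((↑) : J → κ) t Subtype.val_injective.injOn
        (fun i => ν {i}) (by
          intro x hx hxr
          exact absurd ⟨⟨x, ht hx⟩, rfl⟩ hxr), ← hsum]
    rw [h2]
    exact Summable.sum_le_tsum _ (fun i _ => hnn _) hsummable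
  have huniv : ν Set.univ = 1 := by
    simp [hν, chi_univ, hφ.map_one]
  intro I
  set SI := ∑' i : I, ν {(i : κ)} with hSI
  set SIc := ∑' i : (Iᶜ : Set κ), ν {(i : κ)} with hSIc
  obtain ⟨hsumI, hleI, hfinI⟩ := hfam I
  obtain ⟨hsumIc, hleIc, hfinIc⟩ := hfam Iᶜ
  have htot : ν I + ν Iᶜ = 1 := by
    rw [← hadd I Iᶜ disjoint_compl_right, Set.union_compl_self, huniv]
  have hlow : 1 ≤ SI + SIc := by
    rw [← hsup]
    apply ciSup_le
    rintro ⟨J, hJ⟩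
    have hJsplit : ν J = ν (J ∩ I) + ν (J ∩ Iᶜ) := by
      rw [← hadd (J ∩ I) (J ∩ Iᶜ)
        (disjoint_compl_right.mono inf_le_right inf_le_right),
        Set.inter_union_compl]
    have h1 : ν (J ∩ I) ≤ SI := by
      have := hfinI (hJ.inter_of_left I).toFinset
        (by rw [Set.Finite.coe_toFinset]; exact Set.inter_subset_right)
      rwa [Set.Finite.coe_toFinset] at this
    have h2 : ν (J ∩ Iᶜ) ≤ SIc := by
      have := hfinIc (hJ.inter_of_left Iᶜ).toFinset
        (by rw [Set.Finite.coe_toFinset]; exact Set.inter_subset_right)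
      rwa [Set.Finite.coe_toFinset] at this
    show (φ (chi J)).re ≤ SI + SIc
    calc (φ (chi J)).re = ν J := rfl
      _ ≤ SI + SIc := by rw [hJsplit]; exact add_le_add h1 h2
  have hSIeq : SI = ν I := by linarith
  rw [hreal I, ← hSIeq]
  rw [hSI, Complex.ofReal_tsum]
  exact tsum_congr (fun i => (hreal {(i : κ)}).symm)
end
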